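/- arXiv:2210.06024 — 2 statements merged into one kernel-verified Lean document; each statement's English description precedes it below -/
import Mathlib

section
/- For every x ∈ M₀ₛₐ one has lim_{n→∞} χ((s^L_n(x))²) = 0. -/
open Filter Topology

open scoped ComplexOrder

/-- Number of points of the `n`-th interval `I_n = [ia n, ib n]`. -/
noncomputable def Ncard (ia ib : ℕ → ℤ) (n : ℕ) : ℕ := (Finset.Icc (ia n) (ib n)).card

/-- `p_n := ⌊|I_n|^{1/4}·log|I_n|⌋`. -/
noncomputable def pn (ia ib : ℕ → ℤ) (n : ℕ) : ℕ :=
  ⌊(Ncard ia ib n : ℝ) ^ ((1 : ℝ) / 4) * Real.log (Ncard ia ib n)⌋₊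

/-- `q_n := ⌊|I_n|^{1/2} / p_n⌋`. -/
noncomputable def qn (ia ib : ℕ → ℤ) (n : ℕ) : ℕ :=
  ⌊(Ncard ia ib n : ℝ) ^ ((1 : ℝ) / 2) / (pn ia ib n : ℝ)⌋₊

/-- `m_n := ⌊|I_n| / (p_n + q_n)⌋`. -/
noncomputable def mn (ia ib : ℕ → ℤ) (n : ℕ) : ℕ :=
  Ncard ia ib n / (pn ia ib n + qn ia ib n)

/-- The `l`-th `J`-block `J^{(n)}_l` (for `l = 1, …, m_n`): the interval of length `p_n`
starting at `ia n + (l-1)(p_n+q_n)`. -/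
noncomputable def Jblock (ia ib : ℕ → ℤ) (n l : ℕ) : Finset ℤ :=
  Finset.Icc (ia n + ((l - 1) * (pn ia ib n + qn ia ib n) : ℕ))
    (ia n + ((l - 1) * (pn ia ib n + qn ia ib n) : ℕ) + (pn ia ib n : ℕ) - 1)

/-- `J_n := ⋃_{l=1}^{m_n} J^{(n)}_l`. -/
noncomputable def Jset (ia ib : ℕ → ℤ) (n : ℕ) : Finset ℤ :=
  (Finset.Icc 1 (mn ia ib n)).biUnion (fun l => Jblock ia ib n l)

/-- `L_n := I_n \ J_n = ⋃_{l=1}^{m_n+1} L^{(n)}_l`. -/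
noncomputable def Lset (ia ib : ℕ → ℤ) (n : ℕ) : Finset ℤ :=
  Finset.Icc (ia n) (ib n) \ Jset ia ib n

/-- `s^J_n(x) := |I_n|^{-1/2} ∑_{k∈J_n} (γ_k(x) − χ(x)·1)` (set to `0` when `|I_n| < 3`). -/
noncomputable def sJ {A : Type*} [NormedRing A] [StarRing A] [NormedAlgebra ℂ A]
    [StarModule ℂ A] (γ : ℤ → A ≃⋆ₐ[ℂ] A) (χ : A →ₗ[ℂ] ℂ) (ia ib : ℕ → ℤ)
    (n : ℕ) (x : A) : A :=
  if 3 ≤ Ncard ia ib n then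
    (Real.sqrt (Ncard ia ib n) : ℂ)⁻¹ • ∑ k ∈ Jset ia ib n, (γ k x - χ x • 1)
  else 0

/-- `s^L_n(x) := |I_n|^{-1/2} ∑_{k∈L_n} (γ_k(x) − χ(x)·1)` (set to `0` when `|I_n| < 3`). -/
noncomputable def sL {A : Type*} [NormedRing A] [StarRing A] [NormedAlgebra ℂ A]
    [StarModule ℂ A] (γ : ℤ → A ≃⋆ₐ[ℂ] A) (χ : A →ₗ[ℂ] ℂ) (ia ib : ℕ → ℤ)
    (n : ℕ) (x : A) : A :=
  if 3 ≤ Ncard ia ib n then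
    (Real.sqrt (Ncard ia ib n) : ℂ)⁻¹ • ∑ k ∈ Lset ia ib n, (γ k x - χ x • 1)
  else 0


open scoped ComplexStarModule


lemma state_norm_bound {A : Type*} [NormedRing A] [StarRing A] [CStarRing A] [NormedAlgebra ℂ A]
    [CompleteSpace A] [StarModule ℂ A]
    (χ : A →ₗ[ℂ] ℂ) (hχ1 : χ 1 = 1) (hχpos : ∀ x : A, 0 ≤ χ (star x * x)) (z : A) :
    ‖χ z‖ ≤ 2 * ‖z‖ := by
  letI : CStarAlgebra A := {}
  letI : PartialOrder A := CStarAlgebra.spectralOrder A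
  letI : StarOrderedRing A := CStarAlgebra.spectralOrderedRing A
  have hmono : ∀ u : A, 0 ≤ u → 0 ≤ χ u := by
    intro u hu
    rw [StarOrderedRing.nonneg_iff] at hu
    induction hu using AddSubmonoid.closure_induction with
    | mem v hv => obtain ⟨s, rfl⟩ := hv; exact hχpos s
    | zero => simp
    | add v w _ _ hv hw => rw [map_add]; exact add_nonneg hv hw
  have hsa : ∀ h : A, IsSelfAdjoint h → ‖χ h‖ ≤ ‖h‖ := by
    intro h hh
    have halg : χ (algebraMap ℝ A ‖h‖) = (‖h‖ : ℂ) := by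
      rw [IsScalarTower.algebraMap_apply ℝ ℂ A, Algebra.algebraMap_eq_smul_one, map_smul, hχ1,
        smul_eq_mul, mul_one, Complex.coe_algebraMap]
    have h1 : 0 ≤ χ (algebraMap ℝ A ‖h‖ - h) :=
      hmono _ (sub_nonneg.2 hh.le_algebraMap_norm_self)
    have h2 : 0 ≤ χ (h - (-(algebraMap ℝ A ‖h‖))) :=
      hmono _ (sub_nonneg.2 hh.neg_algebraMap_norm_le_self)
    rw [map_sub, halg] at h1
    rw [map_sub, map_neg, halg, sub_neg_eq_add] at h2
    rw [Complex.le_def] at h1 h2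
    simp only [Complex.sub_re, Complex.sub_im, Complex.add_re, Complex.add_im, Complex.zero_re,
      Complex.zero_im, Complex.ofReal_re, Complex.ofReal_im] at h1 h2
    have him : (χ h).im = 0 := by linarith [h1.2]
    have : χ h = (((χ h).re : ℝ) : ℂ) := Complex.ext rfl (by simp [him])
    rw [this, Complex.norm_real, Real.norm_eq_abs, abs_le]
    constructor <;> linarith [h1.1, h2.1]
  have key := realPart_add_I_smul_imaginaryPart z
  have hRe : ‖(ℜ z : A)‖ ≤ ‖z‖ := by
    rw [realPart_apply_coe, norm_smul]
    calc ‖(2:ℝ)⁻¹‖ * ‖z + star z‖ ≤ 2⁻¹ * (‖z‖ + ‖star z‖) := by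
          rw [Real.norm_eq_abs, abs_of_pos (by norm_num)]
          exact mul_le_mul_of_nonneg_left (norm_add_le _ _) (by norm_num)
      _ = ‖z‖ := by rw [norm_star]; ring
  have hIm : ‖(ℑ z : A)‖ ≤ ‖z‖ := by
    rw [imaginaryPart_apply_coe, norm_smul, norm_smul]
    calc ‖-Complex.I‖ * (‖(2:ℝ)⁻¹‖ * ‖z - star z‖) ≤ 1 * (2⁻¹ * (‖z‖ + ‖star z‖)) := by
          rw [norm_neg, Complex.norm_I, Real.norm_eq_abs, abs_of_pos (by norm_num)]
          exact mul_le_mul_of_nonneg_left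
            (mul_le_mul_of_nonneg_left (norm_sub_le _ _) (by norm_num)) (by norm_num)
      _ = ‖z‖ := by rw [norm_star]; ring
  calc ‖χ z‖ = ‖χ ((ℜ z : A) + Complex.I • (ℑ z : A))‖ := by rw [key]
    _ = ‖χ (ℜ z : A) + Complex.I * χ (ℑ z : A)‖ := by rw [map_add, map_smul, smul_eq_mul]
    _ ≤ ‖χ (ℜ z : A)‖ + ‖Complex.I‖ * ‖χ (ℑ z : A)‖ := by
        refine (norm_add_le _ _).trans ?_; rw [norm_mul]
    _ ≤ ‖z‖ + 1 * ‖z‖ := by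
        have := hsa _ (ℜ z).2
        have := hsa _ (ℑ z).2
        rw [Complex.norm_I]
        gcongr <;> [exact (hsa _ (ℜ z).2).trans hRe; exact (hsa _ (ℑ z).2).trans hIm]
    _ = 2 * ‖z‖ := by ring


noncomputable def pN (N : ℕ) : ℕ := ⌊(N : ℝ) ^ ((1 : ℝ) / 4) * Real.log N⌋₊
noncomputable def qN (N : ℕ) : ℕ := ⌊(N : ℝ) ^ ((1 : ℝ) / 2) / (pN N : ℝ)⌋₊
noncomputable def mN (N : ℕ) : ℕ := N / (pN N + qN N)

lemma mp_le (N : ℕ) : mN N * pN N ≤ N :=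
  le_trans (Nat.mul_le_mul_left _ (Nat.le_add_right _ _)) (Nat.div_mul_le_self _ _)

lemma aux_real (X Y Nr lg p q m : ℝ)
    (hXY : X * X = Y) (hYN : Y * Y = Nr) (hX2 : 2 ≤ X) (hlg1 : 1 ≤ lg) (hlgX : lg ≤ 4 * X)
    (hplow : X * lg / 2 ≤ p) (hpup : p ≤ X * lg) (hq0 : 0 ≤ q) (hqup : q ≤ Y / p)
    (hm : Nr / (p + q) - 1 ≤ m) :
    (Nr - m * p) / Nr ≤ 4 / lg ^ 2 + 4 / Y := by
  have hXpos : (0 : ℝ) < X := by linarith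
  have hYpos : (0 : ℝ) < Y := by nlinarith
  have hNpos : (0 : ℝ) < Nr := by nlinarith
  have hppos : (0 : ℝ) < p := by nlinarith
  have hspos : (0 : ℝ) < p + q := by linarith
  have step1 : (Nr - m * p) / Nr ≤ q / (p + q) + p / Nr := by
    have hmp : (Nr / (p + q) - 1) * p ≤ m * p := mul_le_mul_of_nonneg_right hm hppos.le
    have hexp : Nr - (Nr / (p + q) - 1) * p = Nr * q / (p + q) + p := by
      field_simp
      ring
    have hnum : Nr - m * p ≤ Nr * q / (p + q) + p := by linarith
    calc (Nr - m * p) / Nr ≤ (Nr * q / (p + q) + p) / Nr :=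
          (div_le_div_iff_of_pos_right hNpos).2 hnum
      _ = q / (p + q) + p / Nr := by field_simp
  have step2 : q / (p + q) ≤ 4 / lg ^ 2 := by
    have e1 : q / (p + q) ≤ q / p := div_le_div_of_nonneg_left hq0 hppos (by linarith)
    have e2 : q / p ≤ (Y / p) / p := (div_le_div_iff_of_pos_right hppos).2 hqup
    have e3 : (Y / p) / p = Y / (p * p) := div_div _ _ _
    have hpp : (X * lg / 2) * (X * lg / 2) ≤ p * p :=
      mul_le_mul hplow hplow (by positivity) hppos.le
    have e4 : Y / (p * p) ≤ Y / ((X * lg / 2) * (X * lg / 2)) :=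
      div_le_div_of_nonneg_left hYpos.le (by positivity) hpp
    have e5 : Y / ((X * lg / 2) * (X * lg / 2)) = 4 / lg ^ 2 := by
      have hval : (X * lg / 2) * (X * lg / 2) = Y * lg ^ 2 / 4 := by nlinarith [hXY]
      have hden : Y * lg ^ 2 / 4 ≠ 0 := by positivity
      rw [hval, div_eq_div_iff hden (by positivity : (lg : ℝ) ^ 2 ≠ 0)]
      ring
    linarith
  have step3 : p / Nr ≤ 4 / Y := by
    have e1 : p / Nr ≤ (4 * Y) / Nr := by
      have : p ≤ 4 * Y := by nlinarith
      exact (div_le_div_iff_of_pos_right hNpos).2 this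
    have e2 : (4 * Y) / Nr = 4 / Y := by
      rw [div_eq_div_iff hNpos.ne' hYpos.ne']
      nlinarith [hYN]
    linarith
  linarith

lemma tendsto_h : Tendsto (fun N : ℕ => ((N : ℝ) - mN N * pN N) / N) atTop (𝓝 0) := by
  have hg : Tendsto (fun N : ℕ => 4 / (Real.log N) ^ 2 + 4 / (N : ℝ) ^ ((1 : ℝ) / 2))
      atTop (𝓝 0) := by
    have l1 : Tendsto (fun N : ℕ => Real.log N) atTop atTop :=
      Real.tendsto_log_atTop.comp tendsto_natCast_atTop_atTop
    have t1 : Tendsto (fun N : ℕ => 4 / (Real.log N) ^ 2) atTop (𝓝 0) :=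
      Tendsto.div_atTop tendsto_const_nhds ((tendsto_pow_atTop two_ne_zero).comp l1)
    have t2 : Tendsto (fun N : ℕ => 4 / (N : ℝ) ^ ((1 : ℝ) / 2)) atTop (𝓝 0) :=
      Tendsto.div_atTop tendsto_const_nhds
        ((tendsto_rpow_atTop (by norm_num)).comp tendsto_natCast_atTop_atTop)
    simpa using t1.add t2
  refine squeeze_zero' ?_ ?_ hg
  · filter_upwards with N
    refine div_nonneg ?_ (by positivity)
    rw [sub_nonneg]
    exact_mod_cast mp_le N
  · filter_upwards [eventually_ge_atTop 16] with N hN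
    have hN16 : (16 : ℝ) ≤ (N : ℝ) := by exact_mod_cast hN
    have hNpos : (0 : ℝ) < N := by linarith
    have key1 : (N : ℝ) ^ ((1 : ℝ) / 4) * (N : ℝ) ^ ((1 : ℝ) / 4) = (N : ℝ) ^ ((1 : ℝ) / 2) := by
      rw [← Real.rpow_add hNpos]; norm_num
    have key2 : (N : ℝ) ^ ((1 : ℝ) / 2) * (N : ℝ) ^ ((1 : ℝ) / 2) = (N : ℝ) := by
      rw [← Real.rpow_add hNpos]; norm_num
    have hlog1 : 1 ≤ Real.log N := by
      rw [Real.le_log_iff_exp_le hNpos]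
      exact le_trans (le_of_lt Real.exp_one_lt_d9) (by linarith)
    have h164 : (2 : ℝ) ≤ (N : ℝ) ^ ((1 : ℝ) / 4) := by
      calc (2 : ℝ) = (16 : ℝ) ^ ((1 : ℝ) / 4) := by
            rw [show (16 : ℝ) = 2 ^ (4 : ℕ) by norm_num, ← Real.rpow_natCast 2 4,
              ← Real.rpow_mul (by norm_num)]
            norm_num
        _ ≤ (N : ℝ) ^ ((1 : ℝ) / 4) := Real.rpow_le_rpow (by norm_num) hN16 (by norm_num)
    have hlogN : Real.log N ≤ 4 * (N : ℝ) ^ ((1 : ℝ) / 4) := by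
      have h1 : Real.log ((N : ℝ) ^ ((1 : ℝ) / 4)) = (1 / 4) * Real.log N := by
        rw [Real.log_rpow hNpos]
      have h2 : Real.log ((N : ℝ) ^ ((1 : ℝ) / 4)) ≤ (N : ℝ) ^ ((1 : ℝ) / 4) - 1 :=
        Real.log_le_sub_one_of_pos (by positivity)
      linarith
    have hupos : (0 : ℝ) < (N : ℝ) ^ ((1 : ℝ) / 4) * Real.log N := by
      have : (0:ℝ) < (N : ℝ) ^ ((1 : ℝ) / 4) := by linarith
      nlinarith
    have hplow : (N : ℝ) ^ ((1 : ℝ) / 4) * Real.log N / 2 ≤ (pN N : ℝ) := by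
      have h1 := Nat.sub_one_lt_floor ((N : ℝ) ^ ((1 : ℝ) / 4) * Real.log N)
      have h2 : (N : ℝ) ^ ((1 : ℝ) / 4) * Real.log N - 1 < (pN N : ℝ) := by
        exact_mod_cast h1
      have hu2 : 2 ≤ (N : ℝ) ^ ((1 : ℝ) / 4) * Real.log N := by nlinarith
      linarith
    have hppos : (0 : ℝ) < (pN N : ℝ) := by nlinarith
    have hp0 : 0 < pN N := by exact_mod_cast hppos
    have hpup : (pN N : ℝ) ≤ (N : ℝ) ^ ((1 : ℝ) / 4) * Real.log N := Nat.floor_le hupos.le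
    have hqup : (qN N : ℝ) ≤ (N : ℝ) ^ ((1 : ℝ) / 2) / (pN N : ℝ) := Nat.floor_le (by positivity)
    have hm : (N : ℝ) / ((pN N : ℝ) + (qN N : ℝ)) - 1 ≤ (mN N : ℝ) := by
      have h1 : N < (mN N + 1) * (pN N + qN N) := by
        have h0 := Nat.div_add_mod N (pN N + qN N)
        have h2 := Nat.mod_lt N (show 0 < pN N + qN N by omega)
        have hmN : mN N = N / (pN N + qN N) := rfl
        nlinarith [h0, h2]
      have h1' : (N : ℝ) < ((mN N : ℝ) + 1) * ((pN N : ℝ) + (qN N : ℝ)) := by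
        exact_mod_cast h1
      have hspos : (0:ℝ) < (pN N : ℝ) + (qN N : ℝ) := by
        have : (0:ℝ) ≤ (qN N : ℝ) := by positivity
        linarith
      have h2' : (N : ℝ) / ((pN N : ℝ) + (qN N : ℝ)) < (mN N : ℝ) + 1 :=
        (div_lt_iff₀ hspos).2 (by linarith)
      linarith
    exact aux_real ((N : ℝ) ^ ((1 : ℝ) / 4)) ((N : ℝ) ^ ((1 : ℝ) / 2)) (N : ℝ) (Real.log N)
      (pN N) (qN N) (mN N) key1 key2 h164 hlog1 hlogN hplow hpup (by positivity) hqup hm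

-- card of a block
lemma Jblock_card (ia ib : ℕ → ℤ) (n l : ℕ) : (Jblock ia ib n l).card = pn ia ib n := by
  rw [Jblock, Int.card_Icc]
  omega

-- blocks are pairwise disjoint
lemma Jblock_disj (ia ib : ℕ → ℤ) (n : ℕ) {l l' : ℕ} (hl : 1 ≤ l) (h : l < l') :
    Disjoint (Jblock ia ib n l) (Jblock ia ib n l') := by
  rw [Finset.disjoint_left]
  intro k h1 h2
  rw [Jblock, Finset.mem_Icc] at h1 h2
  have hkey : (l - 1) * (pn ia ib n + qn ia ib n) + pn ia ib n
      ≤ (l' - 1) * (pn ia ib n + qn ia ib n) := by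
    calc (l - 1) * (pn ia ib n + qn ia ib n) + pn ia ib n
        ≤ (l - 1) * (pn ia ib n + qn ia ib n) + (pn ia ib n + qn ia ib n) := by omega
      _ = (l - 1 + 1) * (pn ia ib n + qn ia ib n) := by ring
      _ ≤ (l' - 1) * (pn ia ib n + qn ia ib n) := Nat.mul_le_mul_right _ (by omega)
  have hkey' : (((l - 1) * (pn ia ib n + qn ia ib n) : ℕ) : ℤ) + ((pn ia ib n : ℕ) : ℤ)
      ≤ (((l' - 1) * (pn ia ib n + qn ia ib n) : ℕ) : ℤ) := by exact_mod_cast hkey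
  omega

-- blocks are inside the interval
lemma Jblock_subset (ia ib : ℕ → ℤ) (n : ℕ) (hIn : ia n ≤ ib n) {l : ℕ}
    (hl : l ∈ Finset.Icc 1 (mn ia ib n)) :
    Jblock ia ib n l ⊆ Finset.Icc (ia n) (ib n) := by
  rw [Finset.mem_Icc] at hl
  intro k hk
  rw [Jblock, Finset.mem_Icc] at hk
  rw [Finset.mem_Icc]
  have hNeq : (Ncard ia ib n : ℤ) = ib n + 1 - ia n := by
    rw [Ncard, Int.card_Icc, Int.toNat_of_nonneg (by linarith)]
  have hkey : (l - 1) * (pn ia ib n + qn ia ib n) + pn ia ib n ≤ Ncard ia ib n := by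
    calc (l - 1) * (pn ia ib n + qn ia ib n) + pn ia ib n
        ≤ (l - 1) * (pn ia ib n + qn ia ib n) + (pn ia ib n + qn ia ib n) := by omega
      _ = (l - 1 + 1) * (pn ia ib n + qn ia ib n) := by ring
      _ = l * (pn ia ib n + qn ia ib n) := by rw [Nat.sub_add_cancel hl.1]
      _ ≤ mn ia ib n * (pn ia ib n + qn ia ib n) := Nat.mul_le_mul_right _ hl.2
      _ ≤ Ncard ia ib n := Nat.div_mul_le_self _ _
  have hkey' : (((l - 1) * (pn ia ib n + qn ia ib n) : ℕ) : ℤ) + ((pn ia ib n : ℕ) : ℤ)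
      ≤ ((Ncard ia ib n : ℕ) : ℤ) := by exact_mod_cast hkey
  omega

lemma Jset_subset (ia ib : ℕ → ℤ) (n : ℕ) (hIn : ia n ≤ ib n) :
    Jset ia ib n ⊆ Finset.Icc (ia n) (ib n) := by
  rw [Jset]
  exact Finset.biUnion_subset.2 fun l hl => Jblock_subset ia ib n hIn hl

lemma Jset_card (ia ib : ℕ → ℤ) (n : ℕ) :
    (Jset ia ib n).card = mn ia ib n * pn ia ib n := by
  rw [Jset, Finset.card_biUnion]
  · rw [Finset.sum_congr rfl fun l _ => Jblock_card ia ib n l, Finset.sum_const,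
      Nat.card_Icc, smul_eq_mul, Nat.add_sub_cancel]
  · intro l hl l' hl' hne
    rw [Finset.mem_coe, Finset.mem_Icc] at hl hl'
    rcases lt_or_gt_of_ne hne with h | h
    · exact Jblock_disj ia ib n hl.1 h
    · exact (Jblock_disj ia ib n hl'.1 h).symm

lemma Lset_card (ia ib : ℕ → ℤ) (n : ℕ) (hIn : ia n ≤ ib n) :
    (Lset ia ib n).card = Ncard ia ib n - mn ia ib n * pn ia ib n := by
  rw [Lset, Finset.card_sdiff_of_subset (Jset_subset ia ib n hIn), Jset_card]
  rfl

lemma Ncard_tendsto (ia ib : ℕ → ℤ) (hI : ∀ n : ℕ, ia n ≤ ib n)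
    (hImono : ∀ n : ℕ, ia (n + 1) ≤ ia n ∧ ib n ≤ ib (n + 1))
    (hIunion : ∀ k : ℤ, ∃ n : ℕ, ia n ≤ k ∧ k ≤ ib n) :
    Tendsto (fun n => Ncard ia ib n) atTop atTop := by
  have hia : Antitone ia := antitone_nat_of_succ_le fun n => (hImono n).1
  have hib : Monotone ib := monotone_nat_of_le_succ fun n => (hImono n).2
  rw [tendsto_atTop_atTop]
  intro b
  obtain ⟨n₀, hn₀, -⟩ := hIunion (ia 0 - b)
  refine ⟨n₀, fun n hn => ?_⟩
  have h1 : ia n ≤ ia 0 - b := le_trans (hia hn) hn₀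
  have h2 : ia 0 ≤ ib n := le_trans (hI 0) (hib (Nat.zero_le n))
  have hsub : Finset.Icc (ia 0 - (b : ℤ)) (ia 0) ⊆ Finset.Icc (ia n) (ib n) :=
    Finset.Icc_subset_Icc h1 h2
  have := Finset.card_le_card hsub
  rw [Int.card_Icc] at this
  rw [Ncard]
  omega

theorem sL_second_moment_limit
    {A : Type*} [NormedRing A] [StarRing A] [CStarRing A] [NormedAlgebra ℂ A]
    [CompleteSpace A] [StarModule ℂ A]
    (M : ℤ → ℤ → Subalgebra ℂ A)
    (hmono : ∀ a b c d : ℤ, a ≤ b → c ≤ a → b ≤ d → M a b ≤ M c d)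
    (hdense : Dense {x : A | ∃ a b : ℤ, a ≤ b ∧ x ∈ M a b})
    (hcomm : ∀ a b c d : ℤ, a ≤ b → c ≤ d → (b < c ∨ d < a) →
      ∀ x ∈ M a b, ∀ y ∈ M c d, x * y = y * x)
    (γ : ℤ → A ≃⋆ₐ[ℂ] A)
    (hγ0 : ∀ x : A, γ 0 x = x)
    (hγadd : ∀ j k : ℤ, ∀ x : A, γ (j + k) x = γ j (γ k x))
    (hγM : ∀ j a b : ℤ, a ≤ b → ⇑(γ j) '' (M a b : Set A) = (M (a + j) (b + j) : Set A))
    (χ : A →ₗ[ℂ] ℂ)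
    (hχ1 : χ 1 = 1)
    (hχpos : ∀ x : A, 0 ≤ χ (star x * x))
    (hχinv : ∀ j : ℤ, ∀ x : A, χ (γ j x) = χ x)
    (hχmult : ∀ a b c d : ℤ, a ≤ b → c ≤ d → (b < c ∨ d < a) →
      ∀ x ∈ M a b, ∀ y ∈ M c d, χ (x * y) = χ x * χ y)
    (ia ib : ℕ → ℤ)
    (hI : ∀ n : ℕ, ia n ≤ ib n)
    (hImono : ∀ n : ℕ, ia (n + 1) ≤ ia n ∧ ib n ≤ ib (n + 1))
    (hIunion : ∀ k : ℤ, ∃ n : ℕ, ia n ≤ k ∧ k ≤ ib n)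
    (x : A)
    (hx : (∃ a b : ℤ, a ≤ b ∧ x ∈ M a b) ∧ IsSelfAdjoint x) :
    Tendsto (fun n : ℕ => χ (sL γ χ ia ib n x ^ 2)) atTop (𝓝 0) := by
  classical
  obtain ⟨⟨a, b, hab, hxM⟩, hsax⟩ := hx
  letI : CStarAlgebra A := {}
  set D : ℕ := (b - a).toNat with hD
  have hDba : (D : ℤ) = b - a := Int.toNat_of_nonneg (by linarith)
  set c0 : ℝ := ‖x‖ + 2 * ‖x‖ * ‖(1 : A)‖ with hc0
  have hc0nn : 0 ≤ c0 := by positivity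
  set C : ℝ := (2 * (D : ℝ) + 1) * (2 * (c0 * c0)) with hCdef
  have hCnn : 0 ≤ C := by positivity
  set y : ℤ → A := fun k => γ k x - χ x • 1 with hy
  have hnorm_y : ∀ k, ‖y k‖ ≤ c0 := by
    intro k
    have h1 : ‖(γ k) x‖ = ‖x‖ :=
      NonUnitalStarAlgHom.norm_map (γ k) (EquivLike.injective (γ k)) x
    have h2 : ‖χ x‖ ≤ 2 * ‖x‖ := state_norm_bound χ hχ1 hχpos x
    calc ‖y k‖ ≤ ‖(γ k) x‖ + ‖χ x • (1 : A)‖ := norm_sub_le _ _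
      _ = ‖x‖ + ‖χ x‖ * ‖(1 : A)‖ := by rw [h1, norm_smul]
      _ ≤ ‖x‖ + (2 * ‖x‖) * ‖(1 : A)‖ := by gcongr
      _ = c0 := by rw [hc0]
  have hterm : ∀ k k' : ℤ, ‖χ (y k * y k')‖ ≤ 2 * (c0 * c0) := by
    intro k k'
    refine (state_norm_bound χ hχ1 hχpos _).trans ?_
    have h1 := norm_mul_le (y k) (y k')
    have h2 := hnorm_y k
    have h3 := hnorm_y k'
    have h4 := norm_nonneg (y k)
    have h5 := norm_nonneg (y k')
    nlinarith
  have hmemM : ∀ k : ℤ, (γ k) x ∈ M (a + k) (b + k) := by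
    intro k
    have himg := hγM k a b hab
    have hmem : (γ k) x ∈ (⇑(γ k) '' (M a b : Set A)) := ⟨x, hxM, rfl⟩
    rw [himg] at hmem
    exact hmem
  have hy_far : ∀ k k' : ℤ, k' ∉ Finset.Icc (k - (D : ℤ)) (k + (D : ℤ)) →
      χ (y k * y k') = 0 := by
    intro k k' hk'
    rw [Finset.mem_Icc, not_and_or, not_le, not_le] at hk'
    have hdisj : b + k < a + k' ∨ b + k' < a + k := by
      rcases hk' with h | h
      · right; omega
      · left; omega
    have hexpand : y k * y k' =
        (γ k) x * (γ k') x - χ x • (γ k') x - χ x • (γ k) x + (χ x * χ x) • 1 := by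
      simp only [hy, sub_mul, mul_sub, smul_mul_assoc, mul_smul_comm, one_mul, mul_one,
        smul_smul, smul_sub]
      abel
    have hmul : χ ((γ k) x * (γ k') x) = χ ((γ k) x) * χ ((γ k') x) :=
      hχmult (a + k) (b + k) (a + k') (b + k') (by linarith) (by linarith) hdisj
        _ (hmemM k) _ (hmemM k')
    rw [hexpand]
    simp only [map_add, map_sub, map_smul, smul_eq_mul, hmul, hχinv, hχ1]
    ring
  have hbound : ∀ n : ℕ, ‖χ (sL γ χ ia ib n x ^ 2)‖ ≤
      C * (((Lset ia ib n).card : ℝ) / (Ncard ia ib n)) := by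
    intro n
    by_cases h3 : 3 ≤ Ncard ia ib n
    · have hN3 : (3 : ℝ) ≤ (Ncard ia ib n : ℝ) := by exact_mod_cast h3
      have hNpos : (0 : ℝ) < (Ncard ia ib n : ℝ) := by linarith
      rw [sL, if_pos h3]
      simp only [← hy]
      set S : A := ∑ k ∈ Lset ia ib n, y k with hS
      set c : ℂ := ((Real.sqrt (Ncard ia ib n) : ℝ) : ℂ)⁻¹ with hc
      have hsq : (c • S) ^ 2 = (c * c) • (S * S) := by rw [sq, smul_mul_smul_comm]
      have hcc : ‖c‖ * ‖c‖ = ((Ncard ia ib n : ℝ))⁻¹ := by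
        rw [hc, norm_inv, Complex.norm_real, Real.norm_eq_abs,
          abs_of_nonneg (Real.sqrt_nonneg _), ← mul_inv,
          Real.mul_self_sqrt (by positivity)]
      have hSS : χ (S * S) = ∑ k ∈ Lset ia ib n, ∑ k' ∈ Lset ia ib n, χ (y k * y k') := by
        rw [hS, Finset.sum_mul_sum, map_sum]
        exact Finset.sum_congr rfl fun k _ => map_sum χ _ _
      have hrow : ∀ k ∈ Lset ia ib n, ‖∑ k' ∈ Lset ia ib n, χ (y k * y k')‖ ≤
          (2 * (D : ℝ) + 1) * (2 * (c0 * c0)) := by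
        intro k _
        refine (norm_sum_le _ _).trans ?_
        have hsplit : ∑ k' ∈ Lset ia ib n, ‖χ (y k * y k')‖ =
            ∑ k' ∈ (Lset ia ib n).filter
              (fun k' => k' ∈ Finset.Icc (k - (D : ℤ)) (k + (D : ℤ))), ‖χ (y k * y k')‖ := by
          rw [← Finset.sum_filter_add_sum_filter_not (Lset ia ib n)
            (fun k' => k' ∈ Finset.Icc (k - (D : ℤ)) (k + (D : ℤ)))]
          have hz : ∑ k' ∈ (Lset ia ib n).filter
              (fun k' => ¬(k' ∈ Finset.Icc (k - (D : ℤ)) (k + (D : ℤ)))),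
              ‖χ (y k * y k')‖ = 0 := by
            refine Finset.sum_eq_zero fun k' hk' => ?_
            rw [hy_far k k' (Finset.mem_filter.1 hk').2, norm_zero]
          rw [hz, add_zero]
        rw [hsplit]
        have hIccCard : (Finset.Icc (k - (D : ℤ)) (k + (D : ℤ))).card = 2 * D + 1 := by
          rw [Int.card_Icc]
          omega
        calc ∑ k' ∈ (Lset ia ib n).filter
              (fun k' => k' ∈ Finset.Icc (k - (D : ℤ)) (k + (D : ℤ))), ‖χ (y k * y k')‖
            ≤ ∑ k' ∈ (Lset ia ib n).filter
              (fun k' => k' ∈ Finset.Icc (k - (D : ℤ)) (k + (D : ℤ))), 2 * (c0 * c0) :=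
              Finset.sum_le_sum fun k' _ => hterm k k'
          _ = (((Lset ia ib n).filter
              (fun k' => k' ∈ Finset.Icc (k - (D : ℤ)) (k + (D : ℤ)))).card : ℝ)
                * (2 * (c0 * c0)) := by rw [Finset.sum_const, nsmul_eq_mul]
          _ ≤ (2 * (D : ℝ) + 1) * (2 * (c0 * c0)) := by
              have hsub : (Lset ia ib n).filter
                  (fun k' => k' ∈ Finset.Icc (k - (D : ℤ)) (k + (D : ℤ))) ⊆
                  Finset.Icc (k - (D : ℤ)) (k + (D : ℤ)) :=
                fun z hz => (Finset.mem_filter.1 hz).2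
              have hcard := Finset.card_le_card hsub
              rw [hIccCard] at hcard
              have hcard' : (((Lset ia ib n).filter
                  (fun k' => k' ∈ Finset.Icc (k - (D : ℤ)) (k + (D : ℤ)))).card : ℝ)
                  ≤ 2 * (D : ℝ) + 1 := by exact_mod_cast hcard
              have : (0:ℝ) ≤ 2 * (c0 * c0) := by positivity
              nlinarith
      have hnormSS : ‖χ (S * S)‖ ≤
          ((Lset ia ib n).card : ℝ) * ((2 * (D : ℝ) + 1) * (2 * (c0 * c0))) := by
        rw [hSS]
        refine (norm_sum_le _ _).trans ?_
        calc ∑ k ∈ Lset ia ib n, ‖∑ k' ∈ Lset ia ib n, χ (y k * y k')‖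
            ≤ ∑ _k ∈ Lset ia ib n, (2 * (D : ℝ) + 1) * (2 * (c0 * c0)) :=
              Finset.sum_le_sum hrow
          _ = ((Lset ia ib n).card : ℝ) * ((2 * (D : ℝ) + 1) * (2 * (c0 * c0))) := by
              rw [Finset.sum_const, nsmul_eq_mul]
      calc ‖χ ((c • S) ^ 2)‖ = ‖c‖ * ‖c‖ * ‖χ (S * S)‖ := by
            rw [hsq, map_smul, smul_eq_mul, norm_mul, norm_mul, mul_assoc]
        _ ≤ ((Ncard ia ib n : ℝ))⁻¹ *
            (((Lset ia ib n).card : ℝ) * ((2 * (D : ℝ) + 1) * (2 * (c0 * c0)))) := by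
            rw [hcc]
            exact mul_le_mul_of_nonneg_left hnormSS (by positivity)
        _ = C * (((Lset ia ib n).card : ℝ) / (Ncard ia ib n)) := by
            rw [hCdef]
            field_simp
    · rw [sL, if_neg h3]
      have h0 : ‖χ ((0 : A) ^ 2)‖ = 0 := by
        rw [show ((0 : A) ^ 2) = 0 by rw [sq, mul_zero], map_zero, norm_zero]
      rw [h0]
      positivity
  have hNt := Ncard_tendsto ia ib hI hImono hIunion
  have hquot : Tendsto (fun n => ((Lset ia ib n).card : ℝ) / (Ncard ia ib n)) atTop (𝓝 0) := by
    have hcomp := tendsto_h.comp hNt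
    refine hcomp.congr fun n => ?_
    have hmp : mn ia ib n * pn ia ib n ≤ Ncard ia ib n :=
      le_trans (Nat.mul_le_mul_left _ (Nat.le_add_right _ _)) (Nat.div_mul_le_self _ _)
    have hpn : pN (Ncard ia ib n) = pn ia ib n := rfl
    have hmn : mN (Ncard ia ib n) = mn ia ib n := rfl
    show ((Ncard ia ib n : ℝ) - mN (Ncard ia ib n) * pN (Ncard ia ib n)) / (Ncard ia ib n)
        = ((Lset ia ib n).card : ℝ) / (Ncard ia ib n)
    rw [hpn, hmn, Lset_card ia ib n (hI n)]
    congr 1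
    rw [Nat.cast_sub hmp]
    push_cast
    ring
  have hfinal := hquot.const_mul C
  rw [mul_zero] at hfinal
  exact squeeze_zero_norm hbound hfinal
end

section
/- For all x, y ∈ M₀ one has lim_{n→∞} ‖[F_n(x), F_n(y)] − |I_n|^{−1} ∑_{j∈I_n} γ_j(c)‖ = 0, where c := ∑_{l∈ℤ} [x, γ_l(y)] (a sum with only finitely many nonzero terms). -/
open Filter Topology

open scoped ComplexOrder


/-- The local fluctuation `F_{I_n}(x)` of `x` over the interval `I_n = [ia n, ib n]`. -/
noncomputable def Fn {A : Type*} [NormedRing A] [StarRing A] [NormedAlgebra ℂ A]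
    [StarModule ℂ A] (γ : ℤ → A ≃⋆ₐ[ℂ] A) (χ : A →ₗ[ℂ] ℂ) (ia ib : ℕ → ℤ)
    (n : ℕ) (x : A) : A :=
  (Real.sqrt ((Finset.Icc (ia n) (ib n)).card) : ℂ)⁻¹ •
    ∑ j ∈ Finset.Icc (ia n) (ib n), (γ j x - χ x • 1)

/-! Since the shifts `χ x • 1` are central, `[F_n x, F_n y]` expands to
`|I_n|⁻¹ ∑_{j ∈ I_n} γ_j (∑_{l ∈ I_n - j} [x, γ_l y])`. By locality `[x, γ_l y]` vanishes for `l`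
outside a finite window `S`, so each inner sum differs from `c` only by the terms with `l ∈ S`
outside `I_n - j`, and this happens for at most `|l|` values of `j`. As the `γ_j` are isometric,
the error is at most `|I_n|⁻¹ ∑_{l ∈ S} |l| ‖[x, γ_l y]‖`, which tends to `0`. -/

open Finset

lemma Int.card_filter_notMem_Icc_sub_le (p q l : ℤ) :
    #{j ∈ Icc p q | l ∉ Icc (p - j) (q - j)} ≤ l.natAbs := by
  have hsub : {j ∈ Icc p q | l ∉ Icc (p - j) (q - j)} ⊆
      Icc p (p - l - 1) ∪ Icc (q - l + 1) q := by
    intro j hj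
    simp only [mem_filter, mem_Icc, not_and, not_le] at hj
    simp only [mem_union, mem_Icc]
    omega
  calc _ ≤ #(Icc p (p - l - 1) ∪ Icc (q - l + 1) q) := card_le_card hsub
    _ ≤ #(Icc p (p - l - 1)) + #(Icc (q - l + 1) q) := card_union_le _ _
    _ ≤ l.natAbs := by rw [Int.card_Icc, Int.card_Icc]; omega

lemma sum_norm_sum_sub_sum_Icc_sub_le {E : Type*} [SeminormedAddCommGroup E] (c : ℤ → E)
    (S : Finset ℤ) (hS : ∀ l ∉ S, c l = 0) (p q : ℤ) :
    ∑ j ∈ Icc p q, ‖∑ l ∈ S, c l - ∑ l ∈ Icc (p - j) (q - j), c l‖ ≤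
      ∑ l ∈ S, l.natAbs * ‖c l‖ := by
  have hdiff (j : ℤ) : ∑ l ∈ S, c l - ∑ l ∈ Icc (p - j) (q - j), c l =
      ∑ l ∈ S, if l ∉ Icc (p - j) (q - j) then c l else 0 := by
    rw [← sum_filter, ← sum_filter_add_sum_filter_not S (· ∈ Icc (p - j) (q - j)) c,
      filter_mem_eq_inter,
      sum_subset inter_subset_right fun l hl hlS => hS l fun h => hlS (mem_inter.2 ⟨h, hl⟩),
      add_sub_cancel_left]
  calc ∑ j ∈ Icc p q, ‖∑ l ∈ S, c l - ∑ l ∈ Icc (p - j) (q - j), c l‖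
      ≤ ∑ j ∈ Icc p q, ∑ l ∈ S, if l ∉ Icc (p - j) (q - j) then ‖c l‖ else 0 := by
        gcongr with j
        rw [hdiff]
        refine (norm_sum_le _ _).trans_eq (sum_congr rfl fun l _ => ?_)
        split_ifs <;> simp
    _ = ∑ l ∈ S, #{j ∈ Icc p q | l ∉ Icc (p - j) (q - j)} * ‖c l‖ := by
        rw [sum_comm]
        simp only [← sum_filter, sum_const, nsmul_eq_mul]
    _ ≤ ∑ l ∈ S, l.natAbs * ‖c l‖ := by
        gcongr with l
        exact_mod_cast Int.card_filter_notMem_Icc_sub_le p q l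

lemma tendsto_card_Icc_atTop {ia ib : ℕ → ℤ} (hia : Antitone ia) (hib : Monotone ib)
    (hunion : ∀ k : ℤ, ∃ n, ia n ≤ k ∧ k ≤ ib n) :
    Tendsto (fun n => #(Icc (ia n) (ib n))) atTop atTop := by
  refine tendsto_atTop_atTop.2 fun K => ?_
  obtain ⟨n₀, hn₀, -⟩ := hunion (-K)
  obtain ⟨n₁, -, hn₁⟩ := hunion K
  refine ⟨max n₀ n₁, fun n hn => ?_⟩
  have h₀ := hia (le_of_max_le_left hn)
  have h₁ := hib (le_of_max_le_right hn)
  rw [Int.card_Icc]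
  omega

section Ring

variable {A : Type*} [Ring A]

lemma commute_of_notMem_Icc {M : ℤ → ℤ → Set A} {γ : ℤ → A → A}
    (hcomm : ∀ a b c d : ℤ, a ≤ b → c ≤ d → (b < c ∨ d < a) →
      ∀ x ∈ M a b, ∀ y ∈ M c d, x * y = y * x)
    (hγM : ∀ j a b : ℤ, a ≤ b → γ j '' M a b = M (a + j) (b + j))
    {a b c d : ℤ} (hab : a ≤ b) (hcd : c ≤ d) {x y : A} (hx : x ∈ M a b) (hy : y ∈ M c d)
    {l : ℤ} (hl : l ∉ Icc (a - d) (b - c)) : x * γ l y = γ l y * x := by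
  rw [mem_Icc, not_and_or, not_le, not_le] at hl
  have hyl : γ l y ∈ M (c + l) (d + l) := hγM l c d hcd ▸ Set.mem_image_of_mem _ hy
  exact hcomm a b (c + l) (d + l) hab (by omega) (by omega) x hx _ hyl

lemma commutator_sub_smul_one {R : Type*} [CommRing R] [Algebra R A] (u v : A) (s t : R) :
    (u - s • 1) * (v - t • 1) - (v - t • 1) * (u - s • 1) = u * v - v * u := by
  simp only [sub_mul, mul_sub, smul_mul_assoc, mul_smul_comm, one_mul, mul_one, smul_sub,
    smul_smul, mul_comm s t]
  abel

lemma sum_mul_sum_sub_sum_mul_sum {ι κ : Type*} (s : Finset ι) (t : Finset κ) (u : ι → A)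
    (v : κ → A) : (∑ i ∈ s, u i) * (∑ k ∈ t, v k) - (∑ k ∈ t, v k) * (∑ i ∈ s, u i) =
      ∑ i ∈ s, ∑ k ∈ t, (u i * v k - v k * u i) := by
  rw [sum_mul, mul_sum, ← sum_sub_distrib]
  refine sum_congr rfl fun i _ => ?_
  rw [mul_sum, sum_mul, sum_sub_distrib]

lemma commutator_sum_Icc_eq {F : Type*} [FunLike F A A] [RingHomClass F A A] {γ : ℤ → F}
    (hγadd : ∀ j k : ℤ, ∀ x : A, γ (j + k) x = γ j (γ k x)) (x y : A) (p q : ℤ) :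
    (∑ j ∈ Icc p q, γ j x) * (∑ k ∈ Icc p q, γ k y) -
        (∑ k ∈ Icc p q, γ k y) * (∑ j ∈ Icc p q, γ j x) =
      ∑ j ∈ Icc p q, γ j (∑ l ∈ Icc (p - j) (q - j), (x * γ l y - γ l y * x)) := by
  rw [sum_mul_sum_sub_sum_mul_sum]
  refine sum_congr rfl fun j _ => ?_
  rw [map_sum]
  refine sum_nbij' (· - j) (· + j) ?_ ?_ ?_ ?_ fun k _ => ?_
  · intro k hk; simp only [mem_Icc] at hk ⊢; omega
  · intro l hl; simp only [mem_Icc] at hl ⊢; omega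
  · intro k _; exact sub_add_cancel k j
  · intro l _; exact add_sub_cancel_right l j
  · rw [map_sub, map_mul, map_mul, ← hγadd, add_sub_cancel]

end Ring

section Fluctuation

variable {A : Type*} [NormedRing A] [StarRing A] [NormedAlgebra ℂ A] [StarModule ℂ A]
  {γ : ℤ → A ≃⋆ₐ[ℂ] A} (χ : A →ₗ[ℂ] ℂ) (ia ib : ℕ → ℤ)

lemma Fn_commutator_eq (hγadd : ∀ j k : ℤ, ∀ x : A, γ (j + k) x = γ j (γ k x)) (n : ℕ)
    (x y : A) :
    Fn γ χ ia ib n x * Fn γ χ ia ib n y - Fn γ χ ia ib n y * Fn γ χ ia ib n x =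
      (#(Icc (ia n) (ib n)) : ℂ)⁻¹ • ∑ j ∈ Icc (ia n) (ib n),
        γ j (∑ l ∈ Icc (ia n - j) (ib n - j), (x * γ l y - γ l y * x)) := by
  have hsqrt (N : ℕ) : ((√(N : ℝ) : ℝ) : ℂ)⁻¹ * ((√(N : ℝ) : ℝ) : ℂ)⁻¹ = (N : ℂ)⁻¹ := by
    rw [← mul_inv, ← Complex.ofReal_mul, Real.mul_self_sqrt (Nat.cast_nonneg N),
      Complex.ofReal_natCast]
  simp only [Fn, smul_mul_smul_comm, ← smul_sub, hsqrt, sum_sub_distrib, sum_const, ← smul_assoc,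
    commutator_sub_smul_one, commutator_sum_Icc_eq hγadd]

lemma norm_Fn_commutator_sub_le (hγadd : ∀ j k : ℤ, ∀ x : A, γ (j + k) x = γ j (γ k x))
    (hγiso : ∀ j : ℤ, ∀ z : A, ‖γ j z‖ = ‖z‖) {x y : A} {S : Finset ℤ}
    (hS : ∀ l ∉ S, x * γ l y - γ l y * x = 0) (n : ℕ) :
    ‖(Fn γ χ ia ib n x * Fn γ χ ia ib n y - Fn γ χ ia ib n y * Fn γ χ ia ib n x) -
        (#(Icc (ia n) (ib n)) : ℂ)⁻¹ • ∑ j ∈ Icc (ia n) (ib n),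
          γ j (∑ l ∈ S, (x * γ l y - γ l y * x))‖ ≤
      (#(Icc (ia n) (ib n)) : ℝ)⁻¹ * ∑ l ∈ S, l.natAbs * ‖x * γ l y - γ l y * x‖ := by
  rw [Fn_commutator_eq χ ia ib hγadd, ← smul_sub, ← sum_sub_distrib, norm_smul, norm_inv,
    Complex.norm_natCast]
  gcongr
  calc _ ≤ ∑ j ∈ Icc (ia n) (ib n), ‖∑ l ∈ S, (x * γ l y - γ l y * x) -
          ∑ l ∈ Icc (ia n - j) (ib n - j), (x * γ l y - γ l y * x)‖ := by
        refine (norm_sum_le _ _).trans_eq (sum_congr rfl fun j _ => ?_)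
        rw [← map_sub, hγiso, norm_sub_rev]
    _ ≤ _ := sum_norm_sum_sub_sum_Icc_sub_le _ S hS _ _

end Fluctuation

theorem Fn_commutator_average_limit_general
    {A : Type*} [NormedRing A] [StarRing A] [CStarRing A] [NormedAlgebra ℂ A]
    [CompleteSpace A] [StarModule ℂ A]
    (M : ℤ → ℤ → Subalgebra ℂ A)
    (hcomm : ∀ a b c d : ℤ, a ≤ b → c ≤ d → (b < c ∨ d < a) →
      ∀ x ∈ M a b, ∀ y ∈ M c d, x * y = y * x)
    (γ : ℤ → A ≃⋆ₐ[ℂ] A)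
    (hγadd : ∀ j k : ℤ, ∀ x : A, γ (j + k) x = γ j (γ k x))
    (hγM : ∀ j a b : ℤ, a ≤ b → ⇑(γ j) '' (M a b : Set A) = (M (a + j) (b + j) : Set A))
    (χ : A →ₗ[ℂ] ℂ)
    (ia ib : ℕ → ℤ)
    (hImono : ∀ n : ℕ, ia (n + 1) ≤ ia n ∧ ib n ≤ ib (n + 1))
    (hIunion : ∀ k : ℤ, ∃ n : ℕ, ia n ≤ k ∧ k ≤ ib n)
    (x y : A)
    (hx : ∃ a b : ℤ, a ≤ b ∧ x ∈ M a b)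
    (hy : ∃ a b : ℤ, a ≤ b ∧ y ∈ M a b) :
    {l : ℤ | x * γ l y - γ l y * x ≠ 0}.Finite ∧
      Tendsto (fun n : ℕ =>
        ‖(Fn γ χ ia ib n x * Fn γ χ ia ib n y - Fn γ χ ia ib n y * Fn γ χ ia ib n x) -
          ((Finset.Icc (ia n) (ib n)).card : ℂ)⁻¹ •
            ∑ j ∈ Finset.Icc (ia n) (ib n),
              γ j (∑' l : ℤ, (x * γ l y - γ l y * x))‖) atTop (𝓝 0) := by
  obtain ⟨a, b, hab, hxa⟩ := hx
  obtain ⟨c, d, hcd, hyc⟩ := hy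
  have hsupp (l : ℤ) (hl : l ∉ Icc (a - d) (b - c)) : x * γ l y - γ l y * x = 0 :=
    sub_eq_zero.2 <| commute_of_notMem_Icc hcomm hγM hab hcd hxa hyc hl
  refine ⟨(Icc (a - d) (b - c)).finite_toSet.subset fun l hl => ?_, ?_⟩
  · by_contra h
    exact hl (hsupp l h)
  let _ : CStarAlgebra A := ⟨⟩
  have hcard := tendsto_card_Icc_atTop (antitone_nat_of_succ_le fun n => (hImono n).1)
    (monotone_nat_of_le_succ fun n => (hImono n).2) hIunion
  rw [tsum_eq_sum hsupp]
  refine squeeze_zero (fun n => norm_nonneg _) (norm_Fn_commutator_sub_le χ ia ib hγadd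
    (fun j => StarAlgEquiv.norm_map (γ j)) hsupp) ?_
  simpa using (tendsto_inv_atTop_zero.comp (tendsto_natCast_atTop_atTop.comp hcard)).mul_const
    (∑ l ∈ Icc (a - d) (b - c), l.natAbs * ‖x * γ l y - γ l y * x‖)

theorem Fn_commutator_average_limit
    {A : Type*} [NormedRing A] [StarRing A] [CStarRing A] [NormedAlgebra ℂ A]
    [CompleteSpace A] [StarModule ℂ A]
    (M : ℤ → ℤ → Subalgebra ℂ A)
    (hmono : ∀ a b c d : ℤ, a ≤ b → c ≤ a → b ≤ d → M a b ≤ M c d)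
    (hdense : Dense {x : A | ∃ a b : ℤ, a ≤ b ∧ x ∈ M a b})
    (hcomm : ∀ a b c d : ℤ, a ≤ b → c ≤ d → (b < c ∨ d < a) →
      ∀ x ∈ M a b, ∀ y ∈ M c d, x * y = y * x)
    (γ : ℤ → A ≃⋆ₐ[ℂ] A)
    (hγ0 : ∀ x : A, γ 0 x = x)
    (hγadd : ∀ j k : ℤ, ∀ x : A, γ (j + k) x = γ j (γ k x))
    (hγM : ∀ j a b : ℤ, a ≤ b → ⇑(γ j) '' (M a b : Set A) = (M (a + j) (b + j) : Set A))
    (χ : A →ₗ[ℂ] ℂ)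
    (hχ1 : χ 1 = 1)
    (hχpos : ∀ x : A, 0 ≤ χ (star x * x))
    (hχinv : ∀ j : ℤ, ∀ x : A, χ (γ j x) = χ x)
    (hχmult : ∀ a b c d : ℤ, a ≤ b → c ≤ d → (b < c ∨ d < a) →
      ∀ x ∈ M a b, ∀ y ∈ M c d, χ (x * y) = χ x * χ y)
    (ia ib : ℕ → ℤ)
    (hI : ∀ n : ℕ, ia n ≤ ib n)
    (hImono : ∀ n : ℕ, ia (n + 1) ≤ ia n ∧ ib n ≤ ib (n + 1))
    (hIunion : ∀ k : ℤ, ∃ n : ℕ, ia n ≤ k ∧ k ≤ ib n)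
    (x y : A)
    (hx : ∃ a b : ℤ, a ≤ b ∧ x ∈ M a b)
    (hy : ∃ a b : ℤ, a ≤ b ∧ y ∈ M a b) :
    {l : ℤ | x * γ l y - γ l y * x ≠ 0}.Finite ∧
      Tendsto (fun n : ℕ =>
        ‖(Fn γ χ ia ib n x * Fn γ χ ia ib n y - Fn γ χ ia ib n y * Fn γ χ ia ib n x) -
          ((Finset.Icc (ia n) (ib n)).card : ℂ)⁻¹ •
            ∑ j ∈ Finset.Icc (ia n) (ib n),
              γ j (∑' l : ℤ, (x * γ l y - γ l y * x))‖) atTop (𝓝 0) :=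
  Fn_commutator_average_limit_general M hcomm γ hγadd hγM χ ia ib hImono hIunion x y hx hy
end
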